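/- Let I, J, K be intervals in a poset P such that I ∩ J, J ∩ K, and I ∩ K are intervals, and let f : C(I) → C(J) and g : C(J) → C(K) be nonzero morphisms of P-modules. Then the composition g ∘ f is nonzero if and only if I ∩ K is nonempty and I ∩ K ⊆ J. -/

import Mathlib

open CategoryTheory
open scoped Classical ENNReal NNReal

set_option linter.unusedSectionVars false
set_option linter.unusedVariables false

/-! ## Posets, intervals, flows -/

variable {P : Type} [PartialOrder P]

/-- A subset of a poset is poset-convex if it contains every point between two of its points. -/
def PosetConvex (I : Set P) : Prop :=
  ∀ ⦃p q r : P⦄, p ∈ I → q ∈ I → p ≤ r → r ≤ q → r ∈ I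

/-- A subset of a poset is poset-connected if any two of its points are joined by a
zigzag path inside the subset. -/
def PosetConnected (I : Set P) : Prop :=
  ∀ p ∈ I, ∀ q ∈ I,
    Relation.ReflTransGen (fun a b => b ∈ I ∧ (a ≤ b ∨ b ≤ a)) p q

/-- An interval in a poset is a poset-convex and poset-connected subset. -/
def IsInterval (I : Set P) : Prop := PosetConvex I ∧ PosetConnected I

/-- `Q` is a poset-connected component of `U`: a poset-connected subset of `U`, maximal with
respect to inclusion among poset-connected subsets of `U`. -/
def IsPosetComponent (U Q : Set P) : Prop :=
  Q ⊆ U ∧ PosetConnected Q ∧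
    ∀ Q' : Set P, Q' ⊆ U → PosetConnected Q' → Q ⊆ Q' → Q' = Q

/-- A subset `Q` of `I ∩ J` is `(I,J)`-valid. -/
def IsValid (I J Q : Set P) : Prop :=
  ∀ p ∈ Q, (∀ q ∈ I, q ≤ p → q ∈ J) ∧ (∀ r ∈ J, p ≤ r → r ∈ I)

/-- An `ℝ`-flow on a poset. -/
structure RFlow (P : Type) [PartialOrder P] where
  Ω : ℝ → P → P
  mono : ∀ t : ℝ, Monotone (Ω t)
  mono_param : ∀ {t s : ℝ}, t ≤ s → ∀ p : P, Ω t p ≤ Ω s p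
  add : ∀ t s : ℝ, ∀ p : P, Ω (t + s) p = Ω t (Ω s p)
  zero : ∀ p : P, Ω 0 p = p

/-- The `t`-shift `I(t)` of a subset of a poset with an `ℝ`-flow. -/
def RFlow.shiftSet (Φ : RFlow P) (I : Set P) (t : ℝ) : Set P := {p : P | Φ.Ω t p ∈ I}

lemma RFlow.self_le (Φ : RFlow P) {t : ℝ} (ht : 0 ≤ t) (p : P) : p ≤ Φ.Ω t p := by
  have h := Φ.mono_param ht p
  rwa [Φ.zero] at h

lemma RFlow.self_le_twice (Φ : RFlow P) {t : ℝ} (ht : 0 ≤ t) (p : P) :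
    p ≤ Φ.Ω t (Φ.Ω t p) :=
  (Φ.self_le ht p).trans (Φ.self_le ht _)

lemma RFlow.omega_neg_omega (Φ : RFlow P) (t : ℝ) (p : P) : Φ.Ω (-t) (Φ.Ω t p) = p := by
  have h := Φ.add (-t) t p
  rw [neg_add_cancel, Φ.zero] at h
  exact h.symm

lemma RFlow.omega_omega_neg (Φ : RFlow P) (t : ℝ) (p : P) : Φ.Ω t (Φ.Ω (-t) p) = p := by
  have h := Φ.add t (-t) p
  rw [add_neg_cancel, Φ.zero] at h
  exact h.symm

lemma RFlow.posetConvex_shiftSet (Φ : RFlow P) {I : Set P} (hI : PosetConvex I) (t : ℝ) :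
    PosetConvex (Φ.shiftSet I t) := by
  intro p q r hp hq hpr hrq
  exact hI hp hq (Φ.mono t hpr) (Φ.mono t hrq)

lemma RFlow.posetConnected_shiftSet (Φ : RFlow P) {I : Set P} (hI : PosetConnected I) (t : ℝ) :
    PosetConnected (Φ.shiftSet I t) := by
  intro p hp q hq
  have h := hI _ hp _ hq
  have h2 := Relation.ReflTransGen.lift
    (p := fun a b : P => b ∈ Φ.shiftSet I t ∧ (a ≤ b ∨ b ≤ a)) (fun x : P => Φ.Ω (-t) x)
    (fun a b hab => ⟨show Φ.Ω t (Φ.Ω (-t) b) ∈ I by rw [Φ.omega_omega_neg]; exact hab.1,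
      hab.2.imp (fun h' => Φ.mono (-t) h') (fun h' => Φ.mono (-t) h')⟩) _ _ h
  simpa only [Function.onFun, Φ.omega_neg_omega] using h2

lemma RFlow.isInterval_shiftSet (Φ : RFlow P) {I : Set P} (hI : IsInterval I) (t : ℝ) :
    IsInterval (Φ.shiftSet I t) :=
  ⟨Φ.posetConvex_shiftSet hI.1 t, Φ.posetConnected_shiftSet hI.2 t⟩

lemma RFlow.shiftSet_nonempty (Φ : RFlow P) {I : Set P} (hI : I.Nonempty) (t : ℝ) :
    (Φ.shiftSet I t).Nonempty := by
  obtain ⟨x, hx⟩ := hI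
  exact ⟨Φ.Ω (-t) x, show Φ.Ω t (Φ.Ω (-t) x) ∈ I by rw [Φ.omega_omega_neg]; exact hx⟩

/-! ## Characteristic (interval) persistence modules -/

variable (K : Type) [Field K]

/-- The pointwise value of the characteristic module of `I`, as a submodule of `K`. -/
noncomputable def charSub (I : Set P) (p : P) : Submodule K K :=
  if p ∈ I then ⊤ else ⊥

lemma charSub_eq_top {I : Set P} {p : P} (hp : p ∈ I) : charSub K I p = ⊤ := if_pos hp

lemma charSub_eq_bot {I : Set P} {p : P} (hp : p ∉ I) : charSub K I p = ⊥ := if_neg hp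

lemma charElt_eq_zero {I : Set P} {p : P} (hp : p ∉ I) (x : ↥(charSub K I p)) : x = 0 := by
  exact Subtype.ext ((Submodule.eq_bot_iff _).mp (charSub_eq_bot K hp) (x : K) x.2)

/-- The structure maps of the characteristic module of `I`. -/
noncomputable def charMap (I : Set P) (p q : P) :
    ↥(charSub K I p) →ₗ[K] ↥(charSub K I q) :=
  if h : p ∈ I ∧ q ∈ I then
    { toFun := fun x => ⟨(x : K), by rw [charSub_eq_top K h.2]; exact Submodule.mem_top⟩
      map_add' := fun x y => rfl
      map_smul' := fun c x => rfl }
  else 0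

lemma charMap_id (I : Set P) (p : P) : charMap K I p p = LinearMap.id := by
  by_cases hp : p ∈ I
  · simp only [charMap, dif_pos (And.intro hp hp)]
    rfl
  · ext x
    rw [charElt_eq_zero K hp x]
    simp

lemma charMap_comp {I : Set P} (hI : PosetConvex I) {p q r : P} (hpq : p ≤ q) (hqr : q ≤ r) :
    (charMap K I q r).comp (charMap K I p q) = charMap K I p r := by
  by_cases hp : p ∈ I
  · by_cases hr : r ∈ I
    · have hq : q ∈ I := hI hp hr hpq hqr
      ext x
      simp only [charMap, dif_pos (And.intro hp hq), dif_pos (And.intro hq hr),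
        dif_pos (And.intro hp hr), LinearMap.comp_apply, LinearMap.coe_mk, AddHom.coe_mk]
    · ext x
      exact congrArg Subtype.val
        ((charElt_eq_zero K hr ((charMap K I q r).comp (charMap K I p q) x)).trans
          (charElt_eq_zero K hr (charMap K I p r x)).symm)
  · ext x
    rw [charElt_eq_zero K hp x]
    simp

/-- The characteristic persistence module `C(I)` of a poset-convex subset `I`. -/
noncomputable def charMod (I : Set P) (hI : PosetConvex I) : P ⥤ ModuleCat K where
  obj p := ModuleCat.of K ↥(charSub K I p)
  map {p q} h := ModuleCat.ofHom (charMap K I p q)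
  map_id p := by rw [charMap_id K I p]; rfl
  map_comp {p q r} h1 h2 := by rw [← ModuleCat.ofHom_comp, charMap_comp K hI (leOfHom h1) (leOfHom h2)]

/-- The zero persistence module, realized as the characteristic module of the empty interval. -/
noncomputable def zeroPMod : P ⥤ ModuleCat K :=
  charMod K (∅ : Set P) (fun _ _ _ hp _ _ _ => absurd hp (Set.notMem_empty _))

/-! ## Barcodes and interval-decomposable modules -/

/-- A barcode over a poset: a multiset of nonempty intervals, encoded as an indexed family. -/
structure Barcode (P : Type) [PartialOrder P] where
  ι : Type
  B : ι → Set P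
  interval : ∀ a : ι, IsInterval (B a)
  nonempty : ∀ a : ι, (B a).Nonempty

/-- The interval-decomposable module `⊕_{a} C(B a)` associated to a barcode. -/
noncomputable def bcMod (D : Barcode P) : P ⥤ ModuleCat K where
  obj p := ModuleCat.of K (Π₀ a : D.ι, ↥(charSub K (D.B a) p))
  map {p q} h := ModuleCat.ofHom (DFinsupp.mapRange.linearMap (fun a => charMap K (D.B a) p q))
  map_id p := by
    have h : (fun a : D.ι => charMap K (D.B a) p p)
        = fun a : D.ι => (LinearMap.id : ↥(charSub K (D.B a) p) →ₗ[K] ↥(charSub K (D.B a) p)) := by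
      funext a; exact charMap_id K (D.B a) p
    show ModuleCat.ofHom (DFinsupp.mapRange.linearMap (fun a => charMap K (D.B a) p p)) = 𝟙 _
    rw [h, DFinsupp.mapRange.linearMap_id]
    rfl
  map_comp {p q r} h1 h2 := by
    have h : (fun a : D.ι => charMap K (D.B a) p r)
        = fun a : D.ι => (charMap K (D.B a) q r).comp (charMap K (D.B a) p q) := by
      funext a
      exact (charMap_comp K (D.interval a).1 (leOfHom h1) (leOfHom h2)).symm
    show ModuleCat.ofHom (DFinsupp.mapRange.linearMap (fun a => charMap K (D.B a) p r)) = _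
    rw [h, DFinsupp.mapRange.linearMap_comp]
    rfl

/-- `M` is interval-decomposable with barcode `D`. -/
def IsDecompositionOf (D : Barcode P) (M : P ⥤ ModuleCat K) : Prop :=
  Nonempty (M ≅ bcMod K D)

/-- The shift of a barcode along a flow. -/
noncomputable def Barcode.shift (D : Barcode P) (Φ : RFlow P) (t : ℝ) : Barcode P where
  ι := D.ι
  B a := Φ.shiftSet (D.B a) t
  interval a := Φ.isInterval_shiftSet (D.interval a) t
  nonempty a := Φ.shiftSet_nonempty (D.nonempty a) t

/-! ## Shifts of modules, interleavings, distances -/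

/-- The shift `M(t)` of a persistence module along a flow. -/
noncomputable def Pshift (Φ : RFlow P) (t : ℝ) (M : P ⥤ ModuleCat K) : P ⥤ ModuleCat K :=
  (Φ.mono t).functor ⋙ M

/-- The ordered pair `(M, N)` is left `ε`-interleaved. -/
noncomputable def LeftInterleaved (Φ : RFlow P) {ε : ℝ} (hε : 0 ≤ ε)
    (M N : P ⥤ ModuleCat K) : Prop :=
  ∃ (f : M ⟶ Pshift K Φ ε N) (g : N ⟶ Pshift K Φ ε M),
    ∀ p : P, f.app p ≫ g.app (Φ.Ω ε p) = M.map (homOfLE (Φ.self_le_twice hε p))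

/-- `M` and `N` are `ε`-interleaved. -/
noncomputable def Interleaved (Φ : RFlow P) {ε : ℝ} (hε : 0 ≤ ε)
    (M N : P ⥤ ModuleCat K) : Prop :=
  ∃ (f : M ⟶ Pshift K Φ ε N) (g : N ⟶ Pshift K Φ ε M),
    (∀ p : P, f.app p ≫ g.app (Φ.Ω ε p) = M.map (homOfLE (Φ.self_le_twice hε p))) ∧
    (∀ p : P, g.app p ≫ f.app (Φ.Ω ε p) = N.map (homOfLE (Φ.self_le_twice hε p)))

/-- The interleaving distance between two persistence modules. -/
noncomputable def dI (Φ : RFlow P) (M N : P ⥤ ModuleCat K) : ℝ≥0∞ :=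
  ⨅ (ε : NNReal) (_ : Interleaved K Φ ε.coe_nonneg M N), (ε : ℝ≥0∞)

/-- An interval `I` is `t`-trivial if the transition morphism `C(I) → C(I(t))` vanishes. -/
noncomputable def IsTrivialIv (Φ : RFlow P) {t : ℝ} (ht : 0 ≤ t)
    (I : Set P) (hI : PosetConvex I) : Prop :=
  ∀ p : P, (charMod K I hI).map (homOfLE (Φ.self_le ht p)) = 0

/-- An `ε`-correspondence between two barcodes. -/
noncomputable def IsCorrespondence (Φ : RFlow P) {ε : ℝ} (hε : 0 ≤ ε)
    (DM DN : Barcode P) (σ : Set (DM.ι × DN.ι)) : Prop :=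
  (∀ ab ∈ σ, Interleaved K Φ hε
      (charMod K (DM.B ab.1) (DM.interval ab.1).1) (charMod K (DN.B ab.2) (DN.interval ab.2).1)) ∧
  (∀ a : DM.ι, (∀ b : DN.ι, (a, b) ∉ σ) →
      Interleaved K Φ hε (charMod K (DM.B a) (DM.interval a).1) (zeroPMod K)) ∧
  (∀ b : DN.ι, (∀ a : DM.ι, (a, b) ∉ σ) →
      Interleaved K Φ hε (zeroPMod K) (charMod K (DN.B b) (DN.interval b).1))

/-- An `ε`-matching between two barcodes. -/
noncomputable def IsMatching (Φ : RFlow P) {ε : ℝ} (hε : 0 ≤ ε)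
    (DM DN : Barcode P) (σ : Set (DM.ι × DN.ι)) : Prop :=
  IsCorrespondence K Φ hε DM DN σ ∧
  (∀ a b b', (a, b) ∈ σ → (a, b') ∈ σ → b = b') ∧
  (∀ a a' b, (a, b) ∈ σ → (a', b) ∈ σ → a = a')

/-- The Hausdorff distance between (modules with) barcodes `DM`, `DN`. -/
noncomputable def dH (Φ : RFlow P) (DM DN : Barcode P) : ℝ≥0∞ :=
  ⨅ (ε : NNReal) (_ : ∃ σ : Set (DM.ι × DN.ι), IsCorrespondence K Φ ε.coe_nonneg DM DN σ),
    (ε : ℝ≥0∞)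

/-- The bottleneck distance between (modules with) barcodes `DM`, `DN`. -/
noncomputable def dB (Φ : RFlow P) (DM DN : Barcode P) : ℝ≥0∞ :=
  ⨅ (ε : NNReal) (_ : ∃ σ : Set (DM.ι × DN.ι), IsMatching K Φ ε.coe_nonneg DM DN σ),
    (ε : ℝ≥0∞)


/-! At each point of `I ∩ J` a morphism `f : C(I) ⟶ C(J)` is multiplication by a scalar, and
naturality makes this scalar agree at `p ≤ q` whenever `p ∈ I` and `q ∈ J` (it vanishes off
`I ∩ J`). On the connected set `I ∩ J` the scalar of a nonzero `f` is therefore a nonzero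
constant, so `f ≫ g ≠ 0` iff `I ∩ J ∩ L` is nonempty; and comparing it at `p ≤ q` shows that
`I ∩ J` is `(I, J)`-valid. Validity of `I ∩ J` and of `J ∩ L` lets membership in `J` propagate
along zigzags, which fill the connected set `I ∩ L`. -/

theorem PosetConnected.subset_of_forall_comparable {I S : Set P} (hI : PosetConnected I)
    (hS : ∀ a ∈ I, a ∈ S → ∀ b ∈ I, a ≤ b ∨ b ≤ a → b ∈ S) {p : P} (hpI : p ∈ I)
    (hpS : p ∈ S) : I ⊆ S := by
  intro q hqI
  have hpq := hI p hpI q hqI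
  clear hqI
  have : q ∈ I ∧ q ∈ S := by
    induction hpq with
    | refl => exact ⟨hpI, hpS⟩
    | tail _ hbc ih => exact ⟨hbc.1, hS _ ih.1 ih.2 _ hbc.1 hbc.2⟩
  exact this.2

theorem PosetConnected.eq_of_forall_le {α : Type*} {I : Set P} (hI : PosetConnected I)
    {φ : P → α} (hφ : ∀ a ∈ I, ∀ b ∈ I, a ≤ b → φ a = φ b) {p q : P} (hp : p ∈ I)
    (hq : q ∈ I) : φ p = φ q := by
  refine (hI.subset_of_forall_comparable (S := {b | φ b = φ p}) ?_ hp rfl hq).symm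
  rintro a ha (hap : φ a = φ p) b hb (hab | hba)
  · exact (hφ a ha b hb hab).symm.trans hap
  · exact (hφ b hb a ha hba).trans hap

theorem nonempty_inter_inter_iff_of_isValid {I J L : Set P} (hIL : PosetConnected (I ∩ L))
    (hIJ : IsValid I J (I ∩ J)) (hJL : IsValid J L (J ∩ L)) :
    (I ∩ J ∩ L).Nonempty ↔ (I ∩ L).Nonempty ∧ I ∩ L ⊆ J := by
  constructor
  · rintro ⟨p, ⟨hpI, hpJ⟩, hpL⟩
    refine ⟨⟨p, hpI, hpL⟩, hIL.subset_of_forall_comparable ?_ ⟨hpI, hpL⟩ hpJ⟩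
    rintro a ⟨haI, haL⟩ haJ b ⟨hbI, hbL⟩ (hab | hba)
    · exact (hJL a ⟨haJ, haL⟩).2 b hbL hab
    · exact (hIJ a ⟨haI, haJ⟩).1 b hbI hba
  · rintro ⟨⟨p, hp⟩, hsub⟩
    exact ⟨p, ⟨hp.1, hsub hp⟩, hp.2⟩

section CharScalar

variable {K} {I J L : Set P}

theorem coe_charMap_apply (p q : P) (x : charSub K I p) :
    (charMap K I p q x : K) = if q ∈ I then (x : K) else 0 := by
  by_cases hp : p ∈ I
  · by_cases hq : q ∈ I <;> simp [charMap, hp, hq]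
  · simp [charElt_eq_zero K hp x]

/-- The generator `1` of `C(I)_p = K` for `p ∈ I`, and `0` when `C(I)_p = 0`. -/
noncomputable def charOne (I : Set P) (p : P) : charSub K I p :=
  ⟨if p ∈ I then 1 else 0, by
    split_ifs with hp
    · rw [charSub_eq_top K hp]; trivial
    · exact zero_mem _⟩

theorem coe_charOne {p : P} (hp : p ∈ I) : (charOne (K := K) I p : K) = 1 := if_pos hp

theorem eq_smul_charOne {p : P} (x : charSub K I p) : x = (x : K) • charOne I p := by
  by_cases hp : p ∈ I
  · ext; simp [charOne, hp]
  · simp [charElt_eq_zero K hp x]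

variable {hI : PosetConvex I} {hJ : PosetConvex J} {hL : PosetConvex L}

/-- `f.app p` with its (co)domain unfolded to `charSub`, so that its values coerce to `K`. -/
noncomputable def charApp (f : charMod K I hI ⟶ charMod K J hJ) (p : P) :
    charSub K I p →ₗ[K] charSub K J p :=
  (f.app p).hom

noncomputable def charScalar (f : charMod K I hI ⟶ charMod K J hJ) (p : P) : K :=
  charApp f p (charOne I p)

variable (f : charMod K I hI ⟶ charMod K J hJ) (g : charMod K J hJ ⟶ charMod K L hL)

theorem charApp_charMap {p q : P} (hpq : p ≤ q) (x : charSub K I p) :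
    charApp f q (charMap K I p q x) = charMap K J p q (charApp f p x) :=
  NatTrans.naturality_apply f (homOfLE hpq) x

theorem coe_charApp_apply {p : P} (x : charSub K I p) :
    (charApp f p x : K) = charScalar f p * x := by
  conv_lhs => rw [eq_smul_charOne x, map_smul]
  rw [Submodule.coe_smul, smul_eq_mul, mul_comm]
  rfl

theorem charScalar_eq_zero_of_notMem_left {p : P} (hp : p ∉ I) : charScalar f p = 0 := by
  rw [charScalar, charElt_eq_zero K hp (charOne I p), map_zero]
  rfl

theorem charScalar_eq_zero_of_notMem_right {p : P} (hp : p ∉ J) : charScalar f p = 0 :=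
  congrArg Subtype.val (charElt_eq_zero K hp _)

theorem charScalar_eq_of_le {p q : P} (hpq : p ≤ q) (hp : p ∈ I) (hq : q ∈ J) :
    charScalar f q = charScalar f p := by
  have h := congrArg Subtype.val (charApp_charMap f hpq (charOne I p))
  rw [coe_charApp_apply, coe_charMap_apply, coe_charMap_apply, if_pos hq, coe_charApp_apply,
    coe_charOne hp] at h
  by_cases hqI : q ∈ I
  · simpa [hqI] using h
  · simpa [charScalar_eq_zero_of_notMem_left f hqI] using h

theorem charScalar_eq_zero_iff : charScalar f = 0 ↔ f = 0 := by
  constructor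
  · intro h
    ext p x
    apply Subtype.ext
    exact (coe_charApp_apply f x).trans (by rw [h, Pi.zero_apply, zero_mul]; rfl)
  · rintro rfl
    rfl

theorem charScalar_comp : charScalar (f ≫ g) = charScalar f * charScalar g := by
  funext p
  rw [Pi.mul_apply, mul_comm]
  exact coe_charApp_apply g _

variable {f g}

theorem charScalar_ne_zero_iff (hconn : PosetConnected (I ∩ J)) (hf : f ≠ 0) {p : P} :
    charScalar f p ≠ 0 ↔ p ∈ I ∩ J := by
  obtain ⟨p₀, hp₀⟩ : ∃ p₀, charScalar f p₀ ≠ 0 := by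
    by_contra! h
    exact hf ((charScalar_eq_zero_iff f).mp (funext h))
  have mem_of_ne_zero : ∀ {q}, charScalar f q ≠ 0 → q ∈ I ∩ J := fun hq =>
    ⟨not_imp_comm.mp (charScalar_eq_zero_of_notMem_left f) hq,
      not_imp_comm.mp (charScalar_eq_zero_of_notMem_right f) hq⟩
  refine ⟨mem_of_ne_zero, fun hp => ?_⟩
  rwa [hconn.eq_of_forall_le (fun a ha b hb hab => (charScalar_eq_of_le f hab ha.1 hb.2).symm) hp
    (mem_of_ne_zero hp₀)]

theorem isValid_inter_of_ne_zero (hconn : PosetConnected (I ∩ J)) (hf : f ≠ 0) :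
    IsValid I J (I ∩ J) := by
  intro p hp
  have hfp := (charScalar_ne_zero_iff hconn hf).mpr hp
  constructor
  · intro q hqI hqp
    rw [charScalar_eq_of_le f hqp hqI hp.2] at hfp
    exact ((charScalar_ne_zero_iff hconn hf).mp hfp).2
  · intro r hrJ hpr
    rw [← charScalar_eq_of_le f hpr hp.1 hrJ] at hfp
    exact ((charScalar_ne_zero_iff hconn hf).mp hfp).1

theorem comp_ne_zero_iff (hIJ : PosetConnected (I ∩ J)) (hJL : PosetConnected (J ∩ L))
    (hf : f ≠ 0) (hg : g ≠ 0) : f ≫ g ≠ 0 ↔ (I ∩ J ∩ L).Nonempty := by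
  rw [Ne, ← charScalar_eq_zero_iff, charScalar_comp, funext_iff]
  simp only [Pi.mul_apply, Pi.zero_apply, not_forall, ← ne_eq, mul_ne_zero_iff,
    charScalar_ne_zero_iff hIJ hf, charScalar_ne_zero_iff hJL hg]
  exact ⟨fun ⟨p, hpIJ, hpJL⟩ => ⟨p, hpIJ, hpJL.2⟩, fun ⟨p, hpIJ, hpL⟩ => ⟨p, hpIJ, hpIJ.2, hpL⟩⟩

end CharScalar

/-- for intervals `I`, `J`, `L` whose pairwise intersections are
intervals and nonzero morphisms `f : C(I) → C(J)`, `g : C(J) → C(L)`, the composition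
`g ∘ f` is nonzero iff `I ∩ L` is nonempty and `I ∩ L ⊆ J`. -/
theorem composition_nonzero_iff (I J L : Set P)
    (hI : IsInterval I) (hJ : IsInterval J) (hL : IsInterval L)
    (hIJ : IsInterval (I ∩ J)) (hJL : IsInterval (J ∩ L)) (hIL : IsInterval (I ∩ L))
    (f : charMod K I hI.1 ⟶ charMod K J hJ.1)
    (g : charMod K J hJ.1 ⟶ charMod K L hL.1)
    (hf : f ≠ 0) (hg : g ≠ 0) :
    f ≫ g ≠ 0 ↔ (I ∩ L).Nonempty ∧ I ∩ L ⊆ J := by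
  rw [comp_ne_zero_iff hIJ.2 hJL.2 hf hg]
  exact nonempty_inter_inter_iff_of_isValid hIL.2 (isValid_inter_of_ne_zero hIJ.2 hf)
    (isValid_inter_of_ne_zero hJL.2 hg)
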